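/- arXiv:1506.07937 — 2 statements merged into one kernel-verified Lean document; each statement's English description precedes it below -/
import Mathlib

section
/- For positive definite A, B ∈ Sym(n): |A^{1/2} − B^{1/2}| ≤ (λ_min(A)^{1/2} + λ_min(B)^{1/2})⁻¹ · |A − B|, where |·| is the spectral norm and A^{1/2} is the positive definite square root. -/
/-! Put `X = √A - √B`, so that `A - B = √A X + X √B`. Take an eigenvector `v` of the symmetric
matrix `X` whose eigenvalue `μ` has `|μ| = ‖X‖`. Then
`⟪(A - B) v, v⟫ = μ (⟪√A v, v⟫ + ⟪√B v, v⟫)`, and `⟪√A v, v⟫ ≥ λ_min(A)^{1/2} ‖v‖²` because the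
eigenvalues of `√A` are the square roots of those of `A`. Hence
`‖X‖ (λ_min(A)^{1/2} + λ_min(B)^{1/2}) ‖v‖² ≤ |⟪(A - B) v, v⟫| ≤ ‖A - B‖ ‖v‖²`. -/

/-- The spectral norm (operator norm w.r.t. the Euclidean norm) of a real matrix. -/
noncomputable def specNorm {m : Type*} [Fintype m] [DecidableEq m]
    (A : Matrix m m ℝ) : ℝ :=
  ‖LinearMap.toContinuousLinearMap (Matrix.toEuclideanLin A)‖

/-- smallest eigenvalue of a Hermitian matrix -/
noncomputable def lambdaMin {n : ℕ} (hn : 0 < n) {A : Matrix (Fin n) (Fin n) ℝ}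
    (hA : A.IsHermitian) : ℝ :=
  Finset.univ.inf' (Finset.univ_nonempty_iff.mpr ⟨⟨0, hn⟩⟩) hA.eigenvalues

/-- The square root of a positive semidefinite matrix, as `Matrix.PosSemidef.sqrt` was defined
in Mathlib of December 2024 (since removed from Mathlib). -/
noncomputable def Matrix.PosSemidef.sqrt {n : Type*} [Fintype n] [DecidableEq n]
    {A : Matrix n n ℝ} (hA : A.PosSemidef) : Matrix n n ℝ :=
  hA.1.eigenvectorUnitary.1 * Matrix.diagonal ((↑) ∘ (√·) ∘ hA.1.eigenvalues) *
    (star hA.1.eigenvectorUnitary : Matrix n n ℝ)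

open scoped RealInnerProductSpace

section EigenvectorOfNorm

variable {𝕜 E : Type*} [RCLike 𝕜] [NormedAddCommGroup E] [InnerProductSpace 𝕜 E]
  [FiniteDimensional 𝕜 E] [CompleteSpace E] [Nontrivial E]

/-- In finite dimension the norm of a self-adjoint operator is the spectral radius, which is
attained on the (finite, nonempty) spectrum. -/
theorem IsSelfAdjoint.exists_hasEigenvector_norm_eq {X : E →L[𝕜] E} (hX : IsSelfAdjoint X) :
    ∃ μ : 𝕜, ‖μ‖ = ‖X‖ ∧ ∃ v, Module.End.HasEigenvector (X : E →ₗ[𝕜] E) μ v := by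
  have hne : (spectrum 𝕜 X).Nonempty := ⟨_, by
    rw [ContinuousLinearMap.spectrum_eq, ← Module.End.hasEigenvalue_iff_mem_spectrum]
    exact hX.isSymmetric.hasEigenvalue_iSup_of_finiteDimensional⟩
  obtain ⟨μ, hμ, hnorm⟩ := spectrum.exists_nnnorm_eq_spectralRadius_of_nonempty hne
  rw [X.spectralRadius_eq_nnnorm hX, ENNReal.coe_inj] at hnorm
  rw [ContinuousLinearMap.spectrum_eq, ← Module.End.hasEigenvalue_iff_mem_spectrum] at hμ
  exact ⟨μ, congrArg NNReal.toReal hnorm, hμ.exists_hasEigenvector⟩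

end EigenvectorOfNorm

namespace ContinuousLinearMap

variable {E : Type*} [NormedAddCommGroup E] [InnerProductSpace ℝ E]

theorem mul_norm_sq_le_inner_of_algebraMap_le {S : E →L[ℝ] E} {a : ℝ}
    (h : algebraMap ℝ (E →L[ℝ] E) a ≤ S) (v : E) : a * ‖v‖ ^ 2 ≤ ⟪S v, v⟫ := by
  have := ((le_def _ _).mp h).inner_nonneg_left v
  simpa [inner_sub_left, real_inner_smul_left, real_inner_self_eq_norm_sq] using this

theorem isSelfAdjoint_of_algebraMap_le [CompleteSpace E] {S : E →L[ℝ] E} {a : ℝ}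
    (h : algebraMap ℝ (E →L[ℝ] E) a ≤ S) : IsSelfAdjoint S := by
  have hdiff := ((le_def _ _).mp h).isSelfAdjoint
  have hscalar : IsSelfAdjoint (algebraMap ℝ (E →L[ℝ] E) a) := .algebraMap _ (.all a)
  simpa using hdiff.add hscalar

theorem norm_sub_le_of_algebraMap_le [FiniteDimensional ℝ E] [CompleteSpace E] {S T : E →L[ℝ] E}
    {a b : ℝ} (ha : algebraMap ℝ (E →L[ℝ] E) a ≤ S) (hb : algebraMap ℝ (E →L[ℝ] E) b ≤ T)
    (hab : 0 < a + b) : ‖S - T‖ ≤ (a + b)⁻¹ * ‖S * S - T * T‖ := by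
  rcases subsingleton_or_nontrivial E with hE | hE
  · simp [Subsingleton.elim (S - T) 0]
  have hX : IsSelfAdjoint (S - T) :=
    (isSelfAdjoint_of_algebraMap_le ha).sub (isSelfAdjoint_of_algebraMap_le hb)
  obtain ⟨μ, hμ, v, hv⟩ := hX.exists_hasEigenvector_norm_eq
  rw [Real.norm_eq_abs] at hμ
  have hXv : (S - T) v = μ • v := hv.apply_eq_smul
  have hv0 : 0 < ‖v‖ := norm_pos_iff.mpr hv.2
  have hsum : (a + b) * ‖v‖ ^ 2 ≤ ⟪S v, v⟫ + ⟪T v, v⟫ := by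
    linarith [mul_norm_sq_le_inner_of_algebraMap_le ha v,
      mul_norm_sq_le_inner_of_algebraMap_le hb v]
  have hsum_nonneg : 0 ≤ ⟪S v, v⟫ + ⟪T v, v⟫ := (mul_nonneg hab.le (sq_nonneg _)).trans hsum
  have hquad : ⟪(S * S - T * T) v, v⟫ = μ * (⟪S v, v⟫ + ⟪T v, v⟫) := by
    have hsplit : (S * S - T * T) v = S ((S - T) v) + (S - T) (T v) := by
      simp only [sub_apply, map_sub]; abel
    have hXsymm : ⟪(S - T) (T v), v⟫ = ⟪T v, (S - T) v⟫ := hX.isSymmetric _ _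
    rw [hsplit, inner_add_left, hXsymm, hXv, map_smul, inner_smul_left, inner_smul_right]
    simp [real_inner_comm, mul_add]
  rw [le_inv_mul_iff₀ hab, ← hμ]
  refine le_of_mul_le_mul_right ?_ (pow_pos hv0 2)
  calc (a + b) * |μ| * ‖v‖ ^ 2 ≤ |μ| * (⟪S v, v⟫ + ⟪T v, v⟫) := by nlinarith [abs_nonneg μ]
    _ = |⟪(S * S - T * T) v, v⟫| := by rw [hquad, abs_mul, abs_of_nonneg hsum_nonneg]
    _ ≤ ‖(S * S - T * T) v‖ * ‖v‖ := abs_real_inner_le_norm _ _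
    _ ≤ ‖S * S - T * T‖ * ‖v‖ ^ 2 := by
      rw [sq, ← mul_assoc]
      gcongr
      exact le_opNorm _ _

end ContinuousLinearMap

namespace Matrix

open scoped MatrixOrder

theorem toEuclideanCLM_le_toEuclideanCLM_iff {𝕜 n : Type*} [RCLike 𝕜] [Fintype n] [DecidableEq n]
    {A B : Matrix n n 𝕜} :
    toEuclideanCLM (𝕜 := 𝕜) (n := n) A ≤ toEuclideanCLM (𝕜 := 𝕜) (n := n) B ↔ A ≤ B := by
  rw [ContinuousLinearMap.le_def, ← map_sub, le_iff, ← isPositive_toEuclideanLin_iff]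
  rfl

namespace PosSemidef

variable {n : Type*} [Fintype n] [DecidableEq n] {A : Matrix n n ℝ}

theorem sqrt_eq_cfc (hA : A.PosSemidef) : hA.sqrt = cfc Real.sqrt A := by
  rw [hA.1.cfc_eq, IsHermitian.cfc, Unitary.conjStarAlgAut_apply]
  rfl

theorem sqrt_mul_self (hA : A.PosSemidef) : hA.sqrt * hA.sqrt = A := by
  rw [hA.sqrt_eq_cfc, ← cfc_mul .., cfc_congr (g := id) fun x hx => ?_, cfc_id ℝ A]
  exact Real.mul_self_sqrt (spectrum_nonneg_of_nonneg hA.nonneg hx)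

end PosSemidef

end Matrix

theorem specNorm_eq_norm_toEuclideanCLM {m : Type*} [Fintype m] [DecidableEq m]
    (M : Matrix m m ℝ) : specNorm M = ‖Matrix.toEuclideanCLM (𝕜 := ℝ) (n := m) M‖ :=
  rfl

theorem lambdaMin_le_eigenvalues {n : ℕ} (hn : 0 < n) {A : Matrix (Fin n) (Fin n) ℝ}
    (hA : A.IsHermitian) (i : Fin n) : lambdaMin hn hA ≤ hA.eigenvalues i :=
  Finset.inf'_le _ (Finset.mem_univ i)

theorem Matrix.PosDef.lambdaMin_pos {n : ℕ} (hn : 0 < n) {A : Matrix (Fin n) (Fin n) ℝ}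
    (hA : A.PosDef) : 0 < lambdaMin hn hA.isHermitian :=
  (Finset.lt_inf'_iff _).mpr fun i _ => hA.eigenvalues_pos i

open scoped MatrixOrder in
theorem Matrix.PosSemidef.algebraMap_sqrt_lambdaMin_le_sqrt {n : ℕ} (hn : 0 < n)
    {A : Matrix (Fin n) (Fin n) ℝ} (hA : A.PosSemidef) :
    algebraMap ℝ _ √(lambdaMin hn hA.1) ≤ hA.sqrt := by
  rw [hA.sqrt_eq_cfc]
  refine algebraMap_le_cfc _ _ _ fun x hx => Real.sqrt_le_sqrt ?_
  obtain ⟨i, rfl⟩ := hA.1.spectrum_real_eq_range_eigenvalues ▸ hx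
  exact lambdaMin_le_eigenvalues hn hA.1 i

theorem stmt_10 (n : ℕ) (hn : 0 < n) (A B : Matrix (Fin n) (Fin n) ℝ)
    (hA : A.PosDef) (hB : B.PosDef) :
    specNorm (hA.posSemidef.sqrt - hB.posSemidef.sqrt) ≤
      (Real.sqrt (lambdaMin hn hA.isHermitian) +
        Real.sqrt (lambdaMin hn hB.isHermitian))⁻¹ * specNorm (A - B) := by
  have hlower {M : Matrix (Fin n) (Fin n) ℝ} (hM : M.PosSemidef) :
      algebraMap ℝ _ √(lambdaMin hn hM.1) ≤
        Matrix.toEuclideanCLM (𝕜 := ℝ) (n := Fin n) hM.sqrt := by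
    rw [← AlgHomClass.commutes (Matrix.toEuclideanCLM (𝕜 := ℝ) (n := Fin n)),
      Matrix.toEuclideanCLM_le_toEuclideanCLM_iff]
    exact hM.algebraMap_sqrt_lambdaMin_le_sqrt hn
  have hpos : 0 < √(lambdaMin hn hA.isHermitian) + √(lambdaMin hn hB.isHermitian) :=
    add_pos (Real.sqrt_pos.mpr (hA.lambdaMin_pos hn)) (Real.sqrt_pos.mpr (hB.lambdaMin_pos hn))
  have h := ContinuousLinearMap.norm_sub_le_of_algebraMap_le
    (hlower hA.posSemidef) (hlower hB.posSemidef) hpos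
  rwa [← map_sub, ← map_mul, ← map_mul, ← map_sub, hA.posSemidef.sqrt_mul_self,
    hB.posSemidef.sqrt_mul_self, ← specNorm_eq_norm_toEuclideanCLM,
    ← specNorm_eq_norm_toEuclideanCLM] at h
end

section
/- Let p, g, Δ ∈ ℝⁿ, α ≥ 0, m ∈ (0,1), w = ½|p|² + α, v = −(|p|² + α), β ∈ ℝ with −β − gᵀp ≥ m·v, and c = max(|g|, |p|, √α). Define Q(ν) := ½|ν g + (1−ν)(p+Δ)|² + νβ + (1−ν)α. Then min_{ν∈[0,1]} Q(ν) ≤ w − w²·(1−m)²/(8c²) + 4c|Δ| + ½|Δ|². -/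
open RealInnerProductSpace Set

/-!
Along the segment from `p` to `g`, the squared norm `‖p + ν • (g - p)‖²` has slope
`2 (⟪p, g⟫ - ‖p‖²)` at `ν = 0` and curvature at most `8 c²`. The descent condition on `β`
makes the linear part of `Q` decrease at rate at least `(1 - m) w`, so
`Q ν ≤ w - ν (1 - m) w + 2 c² ν² + c ‖Δ‖ + ‖Δ‖² / 2`; the perturbation `Δ` only costs the last
two terms. The step `ν = (1 - m) w / (4 c²)` lies in `[0, 1]` and minimises the quadratic.
-/

section InnerProductSpace

variable {E : Type*} [NormedAddCommGroup E] [InnerProductSpace ℝ E]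

lemma norm_smul_add_one_sub_smul_le {g p : E} {c ν : ℝ} (hg : ‖g‖ ≤ c) (hp : ‖p‖ ≤ c)
    (hν0 : 0 ≤ ν) (hν1 : ν ≤ 1) : ‖ν • g + (1 - ν) • p‖ ≤ c := by
  have hν1' : 0 ≤ 1 - ν := sub_nonneg.mpr hν1
  calc ‖ν • g + (1 - ν) • p‖ ≤ ν * ‖g‖ + (1 - ν) * ‖p‖ := by
        refine (norm_add_le _ _).trans_eq ?_
        rw [norm_smul_of_nonneg hν0, norm_smul_of_nonneg hν1']
    _ ≤ ν * c + (1 - ν) * c := by gcongr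
    _ = c := by ring

lemma norm_smul_add_one_sub_smul_sq (g p : E) (ν : ℝ) :
    ‖ν • g + (1 - ν) • p‖ ^ 2 = ‖p‖ ^ 2 + 2 * ν * (⟪p, g⟫ - ‖p‖ ^ 2) + ν ^ 2 * ‖g - p‖ ^ 2 := by
  rw [show ν • g + (1 - ν) • p = p + ν • (g - p) by module, norm_add_sq_real,
    real_inner_smul_right, norm_smul, Real.norm_eq_abs, mul_pow, sq_abs, inner_sub_right,
    real_inner_self_eq_norm_sq]
  ring

lemma half_norm_sq_smul_add_one_sub_smul_add_le {g p Δ : E} {c ν : ℝ} (hg : ‖g‖ ≤ c)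
    (hp : ‖p‖ ≤ c) (hν0 : 0 ≤ ν) (hν1 : ν ≤ 1) :
    (1 / 2) * ‖ν • g + (1 - ν) • (p + Δ)‖ ^ 2 ≤
      (1 / 2) * ‖p‖ ^ 2 + ν * (⟪p, g⟫ - ‖p‖ ^ 2) + 2 * c ^ 2 * ν ^ 2 + c * ‖Δ‖
        + (1 / 2) * ‖Δ‖ ^ 2 := by
  set u := ν • g + (1 - ν) • p
  have hu : ‖u‖ ≤ c := norm_smul_add_one_sub_smul_le hg hp hν0 hν1
  have hΔ : ‖(1 - ν) • Δ‖ ≤ ‖Δ‖ := by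
    rw [norm_smul_of_nonneg (sub_nonneg.mpr hν1)]
    exact mul_le_of_le_one_left (norm_nonneg Δ) (by linarith)
  have hgp : ‖g - p‖ ^ 2 ≤ 4 * c ^ 2 := by
    have : ‖g - p‖ ≤ 2 * c := (norm_sub_le g p).trans (by linarith)
    nlinarith [norm_nonneg (g - p)]
  have htriangle : ‖ν • g + (1 - ν) • (p + Δ)‖ ≤ ‖u‖ + ‖Δ‖ := by
    rw [show ν • g + (1 - ν) • (p + Δ) = u + (1 - ν) • Δ by module]
    exact (norm_add_le _ _).trans (by linarith)
  have hsq : ‖ν • g + (1 - ν) • (p + Δ)‖ ^ 2 ≤ (‖u‖ + ‖Δ‖) ^ 2 :=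
    pow_le_pow_left₀ (norm_nonneg _) htriangle 2
  have hexpand := norm_smul_add_one_sub_smul_sq g p ν
  nlinarith [mul_le_mul_of_nonneg_left hgp (sq_nonneg ν),
    mul_le_mul_of_nonneg_right hu (norm_nonneg Δ)]

end InnerProductSpace

lemma exists_mem_Icc_two_mul_sq_sub_le {a b : ℝ} (ha : 0 ≤ a) (hab : a ≤ 4 * b) :
    ∃ ν ∈ Icc (0 : ℝ) 1, 2 * b * ν ^ 2 - a * ν ≤ -(a ^ 2 / (8 * b)) := by
  rcases (ha.trans hab).eq_or_lt with hb | hb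
  · refine ⟨0, ⟨le_rfl, zero_le_one⟩, ?_⟩
    simp [show b = 0 by linarith]
  · refine ⟨a / (4 * b), ⟨by positivity, (div_le_one (by positivity)).mpr hab⟩, le_of_eq ?_⟩
    field_simp
    ring

theorem stmt_16 (n : ℕ) (p g Δ : EuclideanSpace ℝ (Fin n))
    (α β m w v c : ℝ) (hα : 0 ≤ α) (hm : 0 < m) (hm1 : m < 1)
    (hw : w = (1 / 2) * ‖p‖ ^ 2 + α)
    (hv : v = -(‖p‖ ^ 2 + α))
    (hβ : -β - ⟪g, p⟫ ≥ m * v)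
    (hc : c = max ‖g‖ (max ‖p‖ (Real.sqrt α))) :
    sInf ((fun ν : ℝ =>
        (1 / 2) * ‖ν • g + (1 - ν) • (p + Δ)‖ ^ 2 + ν * β + (1 - ν) * α) ''
      Set.Icc 0 1) ≤
      w - w ^ 2 * (1 - m) ^ 2 / (8 * c ^ 2) + 4 * c * ‖Δ‖ + (1 / 2) * ‖Δ‖ ^ 2 := by
  have hg : ‖g‖ ≤ c := hc ▸ le_max_left _ _
  have hp : ‖p‖ ≤ c := hc ▸ (le_max_left _ _).trans (le_max_right _ _)
  have hαc : α ≤ c ^ 2 := by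
    have : Real.sqrt α ≤ c := hc ▸ (le_max_right _ _).trans (le_max_right _ _)
    nlinarith [Real.sq_sqrt hα, Real.sqrt_nonneg α]
  have hc0 : 0 ≤ c := (norm_nonneg g).trans hg
  have hw0 : 0 ≤ w := hw ▸ by positivity
  have hdescent : ⟪p, g⟫ - ‖p‖ ^ 2 + β - α ≤ -((1 - m) * w) := by
    rw [real_inner_comm]
    nlinarith [sq_nonneg ‖p‖]
  have hwc : w ≤ 2 * c ^ 2 := by nlinarith [norm_nonneg p]
  obtain ⟨ν, ⟨hν0, hν1⟩, hν⟩ := exists_mem_Icc_two_mul_sq_sub_le (a := (1 - m) * w) (b := c ^ 2)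
    (by nlinarith) (by nlinarith)
  have hbdd : BddBelow ((fun ν : ℝ =>
      (1 / 2) * ‖ν • g + (1 - ν) • (p + Δ)‖ ^ 2 + ν * β + (1 - ν) * α) '' Set.Icc 0 1) :=
    (isCompact_Icc.image (by fun_prop)).bddBelow
  refine (csInf_le hbdd ⟨ν, ⟨hν0, hν1⟩, rfl⟩).trans ?_
  have hQ := half_norm_sq_smul_add_one_sub_smul_add_le (Δ := Δ) hg hp hν0 hν1
  have hsq : ((1 - m) * w) ^ 2 / (8 * c ^ 2) = w ^ 2 * (1 - m) ^ 2 / (8 * c ^ 2) := by ring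
  nlinarith [mul_le_mul_of_nonneg_left hdescent hν0, mul_nonneg hc0 (norm_nonneg Δ)]
end
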